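/- arXiv:1409.3713 — 2 statements merged into one kernel-verified Lean document; each statement's English description precedes it below -/
import Mathlib

section
/- If a simplicial 2-sphere has a vertex of degree 3 and has more than 4 vertices, then no two vertices of degree 3 are adjacent. -/
open Finset

/-- A combinatorial simplicial 2-sphere (triangulation of S²): a finite pure
2-dimensional simplicial complex, given by its set of triangles, in which every
edge lies in exactly two triangles, every vertex link is connected (hence a
cycle), the complex is connected, and the Euler characteristic is 2. -/
structure SimplicialTwoSphere (V : Type) [Fintype V] [DecidableEq V] where
  faces : Finset (Finset V)
  card_three : ∀ t ∈ faces, t.card = 3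
  covers : ∀ v : V, ∃ t ∈ faces, v ∈ t
  edge_two : ∀ e : Finset V, e.card = 2 → (∃ t ∈ faces, e ⊆ t) →
      (faces.filter fun t => e ⊆ t).card = 2
  connected : ∀ u w : V,
      (SimpleGraph.fromRel fun a b => ∃ t ∈ faces, a ∈ t ∧ b ∈ t).Reachable u w
  link_connected : ∀ v u w : V,
      (∃ t ∈ faces, v ∈ t ∧ u ∈ t ∧ u ≠ v) →
      (∃ t ∈ faces, v ∈ t ∧ w ∈ t ∧ w ≠ v) →
      (SimpleGraph.fromRel fun a b =>
        ∃ t ∈ faces, v ∈ t ∧ a ∈ t ∧ b ∈ t ∧ a ≠ v ∧ b ≠ v).Reachable u w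
  euler : (Fintype.card V : ℤ)
      - ((faces.biUnion fun t => t.powersetCard 2).card : ℤ) + (faces.card : ℤ) = 2

variable {V : Type} [Fintype V] [DecidableEq V]

/-- The edges of a simplicial 2-sphere. -/
def SimplicialTwoSphere.edges (K : SimplicialTwoSphere V) : Finset (Finset V) :=
  K.faces.biUnion fun t => t.powersetCard 2

/-- The degree of a vertex: the number of incident edges. -/
def SimplicialTwoSphere.degree (K : SimplicialTwoSphere V) (v : V) : ℕ :=
  (K.edges.filter fun e => v ∈ e).card

/-- The number of vertices of degree `k`. -/
def SimplicialTwoSphere.p (K : SimplicialTwoSphere V) (k : ℕ) : ℕ :=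
  (Finset.univ.filter fun v => K.degree v = k).card

/-!
If the degree-3 vertices `u` and `w` are adjacent, let `{u, w, a}` and `{u, w, b}` be the two
triangles on the edge `uw`. Having degree 3, `u` and `w` have no neighbours outside
`S = {u, w, a, b}`, which forces `{u, a, b}` and `{w, a, b}` to be triangles as well. Then every
triangle through two vertices of `S` lies in `S`; connectivity of the links spreads this to every
triangle through one vertex of `S`, and connectivity of the sphere then gives `S = V`.
-/

theorem SimpleGraph.Reachable.mem_of_adj_mem {α : Type*} {G : SimpleGraph α} {S : Set α}
    {u v : α} (h : G.Reachable u v) (hS : ∀ x y, G.Adj x y → x ∈ S → y ∈ S) (hu : u ∈ S) :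
    v ∈ S := by
  obtain ⟨p⟩ := h
  induction p with
  | nil => exact hu
  | cons hadj _ ih => exact ih (hS _ _ hadj hu)

namespace SimplicialTwoSphere

variable (K : SimplicialTwoSphere V)

theorem mem_edges {e : Finset V} : e ∈ K.edges ↔ ∃ t ∈ K.faces, e ⊆ t ∧ e.card = 2 := by
  simp only [edges, mem_biUnion, mem_powersetCard]

theorem pair_mem_edges {t : Finset V} (ht : t ∈ K.faces) {x y : V} (hx : x ∈ t) (hy : y ∈ t)
    (hxy : x ≠ y) : {x, y} ∈ K.edges :=
  K.mem_edges.2 ⟨t, ht, insert_subset hx (singleton_subset_iff.2 hy), card_pair hxy⟩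

theorem ne_of_mem_faces {x y z : V} (h : {x, y, z} ∈ K.faces) : x ≠ y ∧ x ≠ z ∧ y ≠ z := by
  have h3 := K.card_three _ h
  refine ⟨?_, ?_, ?_⟩ <;> rintro rfl <;>
    simp only [mem_insert_self, mem_insert_of_mem, mem_singleton_self, insert_eq_of_mem] at h3 <;>
    exact (card_le_two.trans_lt (by norm_num : 2 < 3)).ne h3

theorem exists_eq_of_pair_subset {t : Finset V} (ht : t ∈ K.faces) {x y : V}
    (hxy : x ≠ y) (h : {x, y} ⊆ t) : ∃ z, t = {x, y, z} := by
  obtain ⟨z, -, rfl⟩ := exists_eq_insert_iff.2 ⟨h, by rw [card_pair hxy, K.card_three t ht]⟩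
  exact ⟨z, by ext; simp only [mem_insert, mem_singleton]; tauto⟩

theorem eq_or_eq_of_pair_subset {x y : V} (hxy : x ≠ y) {t₁ t₂ t : Finset V}
    (ht₁ : t₁ ∈ K.faces) (ht₂ : t₂ ∈ K.faces) (ht : t ∈ K.faces) (h₁ : {x, y} ⊆ t₁)
    (h₂ : {x, y} ⊆ t₂) (h : {x, y} ⊆ t) (hne : t₁ ≠ t₂) : t = t₁ ∨ t = t₂ := by
  have hsub : {t₁, t₂} ⊆ K.faces.filter fun s => {x, y} ⊆ s := by
    rw [insert_subset_iff, singleton_subset_iff, mem_filter, mem_filter]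
    exact ⟨⟨ht₁, h₁⟩, ht₂, h₂⟩
  have hcard := K.edge_two {x, y} (card_pair hxy) ⟨t₁, ht₁, h₁⟩
  have heq := eq_of_subset_of_card_le hsub (by rw [hcard, card_pair hne])
  have hmem : t ∈ ({t₁, t₂} : Finset (Finset V)) := heq ▸ mem_filter.2 ⟨ht, h⟩
  simpa using hmem

theorem exists_ne_insert_mem_faces {x y z : V} (h : {x, y, z} ∈ K.faces) :
    ∃ z', z' ≠ z ∧ {x, y, z'} ∈ K.faces := by
  have hxy := (K.ne_of_mem_faces h).1
  have hsub : ({x, y} : Finset V) ⊆ {x, y, z} := by simp [insert_subset_iff]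
  have hcard := K.edge_two {x, y} (card_pair hxy) ⟨_, h, hsub⟩
  obtain ⟨t, ht, hne⟩ := exists_mem_ne (hcard ▸ one_lt_two) {x, y, z}
  obtain ⟨ht, hxyt⟩ := mem_filter.1 ht
  obtain ⟨z', rfl⟩ := K.exists_eq_of_pair_subset ht hxy hxyt
  exact ⟨z', by rintro rfl; exact hne rfl, ht⟩

theorem subset_insert_of_degree_le {v : V} {N : Finset V} (hvN : v ∉ N)
    (hN : ∀ x ∈ N, {v, x} ∈ K.edges) (hdeg : K.degree v ≤ N.card) {t : Finset V}
    (ht : t ∈ K.faces) (hvt : v ∈ t) : t ⊆ insert v N := by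
  have hinj : Set.InjOn (fun x => ({v, x} : Finset V)) N := by
    intro x hx y hy hxy
    have hx' : x ∈ ({v, y} : Finset V) := by
      simp only at hxy; exact hxy ▸ mem_insert_of_mem (mem_singleton_self x)
    rcases mem_insert.1 hx' with rfl | hx'
    · exact absurd hx hvN
    · exact mem_singleton.1 hx'
  have himage : N.image (fun x => ({v, x} : Finset V)) = K.edges.filter fun e => v ∈ e := by
    refine eq_of_subset_of_card_le (fun e he => ?_) ?_
    · obtain ⟨x, hx, rfl⟩ := mem_image.1 he
      exact mem_filter.2 ⟨hN x hx, mem_insert_self v _⟩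
    · rw [card_image_of_injOn hinj]; exact hdeg
  intro x hx
  by_cases hxv : x = v
  · exact hxv ▸ mem_insert_self v N
  have hedge : {v, x} ∈ K.edges.filter fun e => v ∈ e :=
    mem_filter.2 ⟨K.pair_mem_edges ht hvt hx (Ne.symm hxv), mem_insert_self v _⟩
  rw [← himage] at hedge
  obtain ⟨y, hy, hyx⟩ := mem_image.1 hedge
  have hx' : x ∈ ({v, y} : Finset V) := hyx ▸ mem_insert_of_mem (mem_singleton_self x)
  rcases mem_insert.1 hx' with rfl | hx'
  · exact absurd rfl hxv
  · exact mem_insert_of_mem (mem_singleton.1 hx' ▸ hy)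

theorem faces_subset_of_link_closed {S : Finset V} {v : V}
    (hS : ∀ y ∈ S, y ≠ v → ∀ t ∈ K.faces, v ∈ t → y ∈ t → t ⊆ S)
    (h₀ : ∃ t ∈ K.faces, v ∈ t ∧ t ⊆ S) {t : Finset V} (ht : t ∈ K.faces) (hvt : v ∈ t) :
    t ⊆ S := by
  obtain ⟨t₀, ht₀, hvt₀, ht₀S⟩ := h₀
  obtain ⟨y₀, hy₀, hy₀v⟩ := exists_mem_ne (by rw [K.card_three t₀ ht₀]; norm_num) v
  intro x hx
  by_cases hxv : x = v
  · exact hxv ▸ ht₀S hvt₀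
  refine (K.link_connected v y₀ x ⟨t₀, ht₀, hvt₀, hy₀, hy₀v⟩ ⟨t, ht, hvt, hx, hxv⟩).mem_of_adj_mem
    (S := ↑S) ?_ (ht₀S hy₀)
  intro y z hyz hy
  obtain ⟨-, ⟨t', ht', hv', hy', hz', hyv, -⟩ | ⟨t', ht', hv', hz', hy', -, hyv⟩⟩ :=
    (SimpleGraph.fromRel_adj _ _ _).1 hyz
  all_goals exact hS y hy hyv t' ht' hv' hy' hz'

theorem eq_univ_of_star_closed {S : Finset V} (hS : S.Nonempty)
    (h : ∀ v ∈ S, ∀ t ∈ K.faces, v ∈ t → t ⊆ S) : S = univ := by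
  obtain ⟨u, hu⟩ := hS
  refine eq_univ_of_forall fun x => (K.connected u x).mem_of_adj_mem (S := ↑S) ?_ hu
  intro y z hyz hy
  obtain ⟨-, ⟨t, ht, hyt, hzt⟩ | ⟨t, ht, hzt, hyt⟩⟩ := (SimpleGraph.fromRel_adj _ _ _).1 hyz
  all_goals exact h y hy t ht hyt hzt

theorem eq_univ_of_edge_closed {S : Finset V} (hS : S.Nonempty)
    (h : ∀ x ∈ S, ∀ y ∈ S, x ≠ y → ∀ t ∈ K.faces, x ∈ t → y ∈ t → t ⊆ S)
    (h₀ : ∀ v ∈ S, ∃ t ∈ K.faces, v ∈ t ∧ t ⊆ S) : S = univ :=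
  K.eq_univ_of_star_closed hS fun v hv _ ht hvt =>
    K.faces_subset_of_link_closed (fun y hy hyv => h v hv y hy (Ne.symm hyv)) (h₀ v hv) ht hvt

theorem faces_subset_of_degree_eq_three {x y a b : V} (hx : K.degree x = 3)
    (ha : {x, y, a} ∈ K.faces) (hb : {x, y, b} ∈ K.faces) (hab : a ≠ b) {t : Finset V}
    (ht : t ∈ K.faces) (hxt : x ∈ t) : t ⊆ {x, y, a, b} := by
  obtain ⟨hxy, hxa, hya⟩ := K.ne_of_mem_faces ha
  obtain ⟨-, hxb, hyb⟩ := K.ne_of_mem_faces hb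
  refine K.subset_insert_of_degree_le (by simp [hxy, hxa, hxb]) ?_ ?_ ht hxt
  · simp only [mem_insert, mem_singleton]
    rintro z (rfl | rfl | rfl)
    · exact K.pair_mem_edges ha (by simp) (by simp) hxy
    · exact K.pair_mem_edges ha (by simp) (by simp) hxa
    · exact K.pair_mem_edges hb (by simp) (by simp) hxb
  · rw [hx, card_eq_three.2 ⟨y, a, b, hya, hyb, hab, rfl⟩]

theorem insert_mem_faces_of_faces_subset {S : Finset V} {x y z b : V} (h : {x, y, z} ∈ K.faces)
    (hx : ∀ t ∈ K.faces, x ∈ t → t ⊆ S) (hS : ∀ v ∈ S, v = x ∨ v = y ∨ v = z ∨ v = b) :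
    {x, y, b} ∈ K.faces := by
  obtain ⟨z', hz', hf⟩ := K.exists_ne_insert_mem_faces h
  obtain ⟨-, hxz', hyz'⟩ := K.ne_of_mem_faces hf
  rcases hS z' (hx _ hf (mem_insert_self _ _) (by simp)) with rfl | rfl | rfl | rfl
  exacts [absurd rfl hxz', absurd rfl hyz', absurd rfl hz', hf]

theorem eq_univ_of_degree_eq_three {u w a b : V} (hu : K.degree u = 3) (hw : K.degree w = 3)
    (ha : {u, w, a} ∈ K.faces) (hb : {u, w, b} ∈ K.faces) (hab : a ≠ b) :
    {u, w, a, b} = univ := by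
  obtain ⟨huw, hua, -⟩ := K.ne_of_mem_faces ha
  obtain ⟨-, hub, -⟩ := K.ne_of_mem_faces hb
  have hS : ∀ v ∈ ({u, w, a, b} : Finset V), v = u ∨ v = w ∨ v = a ∨ v = b := by simp
  have hu' : ∀ t ∈ K.faces, u ∈ t → t ⊆ {u, w, a, b} :=
    fun t => K.faces_subset_of_degree_eq_three hu ha hb hab
  have hw' : ∀ t ∈ K.faces, w ∈ t → t ⊆ {u, w, a, b} := fun t ht hwt => by
    rw [insert_comm]
    exact K.faces_subset_of_degree_eq_three hw (insert_comm u w {a} ▸ ha)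
      (insert_comm u w {b} ▸ hb) hab ht hwt
  have huab : {u, a, b} ∈ K.faces :=
    K.insert_mem_faces_of_faces_subset (pair_comm w a ▸ ha) hu'
      (by simp only [mem_insert, mem_singleton]; tauto)
  have hwab : {w, a, b} ∈ K.faces :=
    K.insert_mem_faces_of_faces_subset (by rwa [pair_comm a u, insert_comm w u]) hw'
      (by simp only [mem_insert, mem_singleton]; tauto)
  have hab' : ∀ t ∈ K.faces, a ∈ t → b ∈ t → t ⊆ {u, w, a, b} := fun t ht hat hbt => by
    have hne : ({u, a, b} : Finset V) ≠ {w, a, b} := fun h => by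
      simpa [huw, hua, hub] using (h ▸ mem_insert_self u {a, b} : u ∈ ({w, a, b} : Finset V))
    rcases K.eq_or_eq_of_pair_subset hab huab hwab ht (by simp)
      (by simp) (insert_subset hat (singleton_subset_iff.2 hbt)) hne with rfl | rfl
    exacts [hu' _ huab (mem_insert_self _ _), hw' _ hwab (mem_insert_self _ _)]
  refine K.eq_univ_of_edge_closed (insert_nonempty _ _) ?_ ?_
  · intro x hx y hy hxy t ht hxt hyt
    rcases hS x hx with rfl | rfl | rfl | rfl <;> rcases hS y hy with rfl | rfl | rfl | rfl <;>
      first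
      | exact absurd rfl hxy
      | exact hu' t ht ‹_›
      | exact hw' t ht ‹_›
      | exact hab' t ht hxt hyt
      | exact hab' t ht hyt hxt
  · intro v hv
    have hsa := hu' _ ha (mem_insert_self _ _)
    have hsb := hu' _ hb (mem_insert_self _ _)
    rcases hS v hv with rfl | rfl | rfl | rfl
    exacts [⟨_, ha, by simp, hsa⟩, ⟨_, ha, by simp, hsa⟩, ⟨_, ha, by simp, hsa⟩,
      ⟨_, hb, by simp, hsb⟩]

end SimplicialTwoSphere

theorem degree_three_not_adjacent_general (K : SimplicialTwoSphere V) (hm : 4 < Fintype.card V) :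
    ∀ u w : V, K.degree u = 3 → K.degree w = 3 → {u, w} ∉ K.edges := by
  intro u w hu hw he
  obtain ⟨t, ht, hsub, hcard⟩ := K.mem_edges.1 he
  have huw : u ≠ w := by rintro rfl; simp at hcard
  obtain ⟨a, rfl⟩ := K.exists_eq_of_pair_subset ht huw hsub
  obtain ⟨b, hba, hb⟩ := K.exists_ne_insert_mem_faces ht
  have huniv := K.eq_univ_of_degree_eq_three hu hw ht hb (Ne.symm hba)
  have h4 : Fintype.card V ≤ 4 := by
    rw [← card_univ, ← huniv]
    exact card_le_four
  omega

theorem degree_three_not_adjacent (K : SimplicialTwoSphere V)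
    (hv : ∃ v : V, K.degree v = 3) (hm : 4 < Fintype.card V) :
    ∀ u w : V, K.degree u = 3 → K.degree w = 3 → {u, w} ∉ K.edges :=
  degree_three_not_adjacent_general K hm
end

section
/- Suppose det(v1, v2, v3) = 1 for v1, v2, v3 ∈ ℤ³ and set w = v1 + v2 + v3. Then the three cones cone(v1,v2,w), cone(v2,v3,w), cone(v3,v1,w) have pairwise intersections equal to the common faces cone(v1,w), cone(v2,w), cone(v3,w) respectively, and their union equals cone(v1,v2,v3). -/
/-- Uniqueness of coordinates with respect to a unimodular triple. -/
lemma uniq3 (V1 V2 V3 : Fin 3 → ℝ)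
    (hd : V1 0 * (V2 1 * V3 2) - V1 0 * (V2 2 * V3 1) - V1 1 * (V2 0 * V3 2)
      + V1 1 * (V2 2 * V3 0) + V1 2 * (V2 0 * V3 1) - V1 2 * (V2 1 * V3 0) = 1)
    {p q r p' q' r' : ℝ}
    (hh : p • V1 + q • V2 + r • V3 = p' • V1 + q' • V2 + r' • V3) :
    p = p' ∧ q = q' ∧ r = r' := by
  have e0 := congrFun hh 0
  have e1 := congrFun hh 1
  have e2 := congrFun hh 2
  simp only [Pi.add_apply, Pi.smul_apply, smul_eq_mul] at e0 e1 e2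
  refine ⟨?_, ?_, ?_⟩
  · linear_combination (V2 1 * V3 2 - V2 2 * V3 1) * e0 + (V2 2 * V3 0 - V2 0 * V3 2) * e1
      + (V2 0 * V3 1 - V2 1 * V3 0) * e2 + (p' - p) * hd
  · linear_combination (V3 1 * V1 2 - V3 2 * V1 1) * e0 + (V3 2 * V1 0 - V3 0 * V1 2) * e1
      + (V3 0 * V1 1 - V3 1 * V1 0) * e2 + (q' - q) * hd
  · linear_combination (V1 1 * V2 2 - V1 2 * V2 1) * e0 + (V1 2 * V2 0 - V1 0 * V2 2) * e1
      + (V1 0 * V2 1 - V1 1 * V2 0) * e2 + (r' - r) * hd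

/-- Determinant of the 3×3 integer matrix with columns `a`, `b`, `c`. -/
def det3 (a b c : Fin 3 → ℤ) : ℤ := Matrix.det (Matrix.of ![a, b, c])

/-- Coercion of an integer vector to a real vector. -/
def toR (v : Fin 3 → ℤ) : Fin 3 → ℝ := fun i => (v i : ℝ)

/-- The cone `{λa : λ ≥ 0}`. -/
def cone1 (a : Fin 3 → ℝ) : Set (Fin 3 → ℝ) := {x | ∃ p : ℝ, 0 ≤ p ∧ x = p • a}

/-- The cone `{λa + μb : λ, μ ≥ 0}`. -/
def cone2 (a b : Fin 3 → ℝ) : Set (Fin 3 → ℝ) :=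
  {x | ∃ p q : ℝ, 0 ≤ p ∧ 0 ≤ q ∧ x = p • a + q • b}

/-- The cone `{λa + μb + νc : λ, μ, ν ≥ 0}`. -/
def cone3 (a b c : Fin 3 → ℝ) : Set (Fin 3 → ℝ) :=
  {x | ∃ p q r : ℝ, 0 ≤ p ∧ 0 ≤ q ∧ 0 ≤ r ∧ x = p • a + q • b + r • c}

theorem star_subdivision (v₁ v₂ v₃ : Fin 3 → ℤ) (h : det3 v₁ v₂ v₃ = 1) :
    let w := v₁ + v₂ + v₃
    cone3 (toR v₁) (toR v₂) (toR w) ∩ cone3 (toR v₂) (toR v₃) (toR w)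
        = cone2 (toR v₂) (toR w) ∧
    cone3 (toR v₂) (toR v₃) (toR w) ∩ cone3 (toR v₃) (toR v₁) (toR w)
        = cone2 (toR v₃) (toR w) ∧
    cone3 (toR v₃) (toR v₁) (toR w) ∩ cone3 (toR v₁) (toR v₂) (toR w)
        = cone2 (toR v₁) (toR w) ∧
    cone3 (toR v₁) (toR v₂) (toR w) ∪ cone3 (toR v₂) (toR v₃) (toR w)
        ∪ cone3 (toR v₃) (toR v₁) (toR w) = cone3 (toR v₁) (toR v₂) (toR v₃) := by
  intro w
  set V1 := toR v₁ with hV1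
  set V2 := toR v₂ with hV2
  set V3 := toR v₃ with hV3
  have hw : toR w = V1 + V2 + V3 := by
    funext i; simp [toR, w, hV1, hV2, hV3]
  -- real determinant equals 1
  have hd : V1 0 * (V2 1 * V3 2) - V1 0 * (V2 2 * V3 1) - V1 1 * (V2 0 * V3 2)
      + V1 1 * (V2 2 * V3 0) + V1 2 * (V2 0 * V3 1) - V1 2 * (V2 1 * V3 0) = 1 := by
    simp only [det3, Matrix.det_fin_three, Matrix.of_apply, Matrix.cons_val', Matrix.cons_val_zero,
      Matrix.cons_val_one, Matrix.head_cons, Matrix.empty_val', Matrix.cons_val_fin_one,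
      Matrix.head_fin_const, Matrix.cons_val_two, Matrix.tail_cons] at h
    have hz : v₁ 0 * (v₂ 1 * v₃ 2) - v₁ 0 * (v₂ 2 * v₃ 1) - v₁ 1 * (v₂ 0 * v₃ 2)
        + v₁ 1 * (v₂ 2 * v₃ 0) + v₁ 2 * (v₂ 0 * v₃ 1) - v₁ 2 * (v₂ 1 * v₃ 0) = 1 := by
      linear_combination h
    simp only [hV1, hV2, hV3, toR]
    exact_mod_cast hz
  refine ⟨?_, ?_, ?_, ?_⟩
  · -- cone3 V1 V2 W ∩ cone3 V2 V3 W = cone2 V2 W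
    ext x
    simp only [cone2, cone3, Set.mem_inter_iff, Set.mem_setOf_eq]
    constructor
    · rintro ⟨⟨a, b, c, ha, hb, hc, hx⟩, ⟨a', b', c', ha', hb', hc', hx'⟩⟩
      have h1 : x = (a + c) • V1 + (b + c) • V2 + c • V3 := by rw [hx, hw]; module
      have h2 : x = c' • V1 + (a' + c') • V2 + (b' + c') • V3 := by rw [hx', hw]; module
      obtain ⟨e1, e2, e3⟩ := uniq3 V1 V2 V3 hd (h1.symm.trans h2)
      have ha0 : a = 0 := by linarith
      exact ⟨b, c, hb, hc, by rw [hx, ha0]; module⟩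
    · rintro ⟨p, q, hp, hq, hx⟩
      exact ⟨⟨0, p, q, le_refl 0, hp, hq, by rw [hx]; module⟩,
        ⟨p, 0, q, hp, le_refl 0, hq, by rw [hx]; module⟩⟩
  · -- cone3 V2 V3 W ∩ cone3 V3 V1 W = cone2 V3 W
    ext x
    simp only [cone2, cone3, Set.mem_inter_iff, Set.mem_setOf_eq]
    constructor
    · rintro ⟨⟨a, b, c, ha, hb, hc, hx⟩, ⟨a', b', c', ha', hb', hc', hx'⟩⟩
      have h1 : x = c • V1 + (a + c) • V2 + (b + c) • V3 := by rw [hx, hw]; module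
      have h2 : x = (b' + c') • V1 + c' • V2 + (a' + c') • V3 := by rw [hx', hw]; module
      obtain ⟨e1, e2, e3⟩ := uniq3 V1 V2 V3 hd (h1.symm.trans h2)
      have ha0 : a = 0 := by linarith
      exact ⟨b, c, hb, hc, by rw [hx, ha0]; module⟩
    · rintro ⟨p, q, hp, hq, hx⟩
      exact ⟨⟨0, p, q, le_refl 0, hp, hq, by rw [hx]; module⟩,
        ⟨p, 0, q, hp, le_refl 0, hq, by rw [hx]; module⟩⟩
  · -- cone3 V3 V1 W ∩ cone3 V1 V2 W = cone2 V1 W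
    ext x
    simp only [cone2, cone3, Set.mem_inter_iff, Set.mem_setOf_eq]
    constructor
    · rintro ⟨⟨a, b, c, ha, hb, hc, hx⟩, ⟨a', b', c', ha', hb', hc', hx'⟩⟩
      have h1 : x = (b + c) • V1 + c • V2 + (a + c) • V3 := by rw [hx, hw]; module
      have h2 : x = (a' + c') • V1 + (b' + c') • V2 + c' • V3 := by rw [hx', hw]; module
      obtain ⟨e1, e2, e3⟩ := uniq3 V1 V2 V3 hd (h1.symm.trans h2)
      have ha0 : a = 0 := by linarith
      exact ⟨b, c, hb, hc, by rw [hx, ha0]; module⟩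
    · rintro ⟨p, q, hp, hq, hx⟩
      exact ⟨⟨0, p, q, le_refl 0, hp, hq, by rw [hx]; module⟩,
        ⟨p, 0, q, hp, le_refl 0, hq, by rw [hx]; module⟩⟩
  · -- union
    ext x
    simp only [cone3, Set.mem_union, Set.mem_setOf_eq]
    constructor
    · rintro ((⟨a, b, c, ha, hb, hc, hx⟩ | ⟨a, b, c, ha, hb, hc, hx⟩) | ⟨a, b, c, ha, hb, hc, hx⟩)
      · exact ⟨a + c, b + c, c, by linarith, by linarith, hc, by rw [hx, hw]; module⟩
      · exact ⟨c, a + c, b + c, hc, by linarith, by linarith, by rw [hx, hw]; module⟩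
      · exact ⟨b + c, c, a + c, by linarith, hc, by linarith, by rw [hx, hw]; module⟩
    · rintro ⟨p, q, r, hp, hq, hr, hx⟩
      rcases le_total p q with h1 | h1 <;> rcases le_total q r with h2 | h2 <;>
        rcases le_total p r with h3 | h3
      · exact Or.inl (Or.inr ⟨q - p, r - p, p, by linarith, by linarith, hp,
          by rw [hx, hw]; module⟩)
      · exact Or.inl (Or.inl ⟨p - r, q - r, r, by linarith, by linarith, hr,
          by rw [hx, hw]; module⟩)
      · exact Or.inl (Or.inr ⟨q - p, r - p, p, by linarith, by linarith, hp,
          by rw [hx, hw]; module⟩)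
      · exact Or.inl (Or.inl ⟨p - r, q - r, r, by linarith, by linarith, hr,
          by rw [hx, hw]; module⟩)
      · exact Or.inr ⟨r - q, p - q, q, by linarith, by linarith, hq,
          by rw [hx, hw]; module⟩
      · exact Or.inr ⟨r - q, p - q, q, by linarith, by linarith, hq,
          by rw [hx, hw]; module⟩
      · exact Or.inl (Or.inl ⟨p - r, q - r, r, by linarith, by linarith, hr,
          by rw [hx, hw]; module⟩)
      · exact Or.inl (Or.inl ⟨p - r, q - r, r, by linarith, by linarith, hr,
          by rw [hx, hw]; module⟩)
end
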